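/- arXiv:1710.03386 — 2 statements merged into one kernel-verified Lean document; each statement's English description precedes it below -/
import Mathlib

section
/- Let G be a finite simple graph on n vertices. If there is a vector d ∈ ℤ^{V(G)} such that rank(L(G,d)) = mz(G), then mz(G) = mr(G) = mr_ℤ(G) = γ(G) = γ_ℤ(G) = mr^cr_ℤ(G), where γ(G) = γ_ℝ(G) and mr(G) = mr_ℝ(G). -/
open scoped Classical

variable {V : Type*}

/-- The generalized Laplacian matrix `L(G, X_G)` of a simple graph `G`, with entries in the
polynomial ring `R[X_G]`: the `(u,v)` entry is the indeterminate `x_u` if `u = v`,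
`-1` if `u` and `v` are adjacent, and `0` otherwise. -/
noncomputable def genLaplacian (R : Type*) [CommRing R] (G : SimpleGraph V) :
    Matrix V V (MvPolynomial V R) := fun u v =>
  if u = v then MvPolynomial.X u else if G.Adj u v then -1 else 0

/-- The ideal generated by the determinants of all `i × i` submatrices of a square matrix. -/
noncomputable def minorsIdeal {S : Type*} [CommRing S] (M : Matrix V V S) (i : ℕ) : Ideal S :=
  Ideal.span { d : S | ∃ f g : Fin i → V, Function.Injective f ∧ Function.Injective g ∧
    d = (M.submatrix f g).det }

/-- The `i`-th critical ideal `I_i(G, X_G) ⊆ R[X_G]` of a simple graph `G`. -/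
noncomputable def criticalIdeal (R : Type*) [CommRing R] (G : SimpleGraph V) (i : ℕ) :
    Ideal (MvPolynomial V R) :=
  minorsIdeal (genLaplacian R G) i

/-- The algebraic co-rank `γ_R(G)`: the largest `i` (with `0 ≤ i ≤ |V(G)|`) such that the
`i`-th critical ideal of `G` over `R` is trivial (i.e. the whole ring). -/
noncomputable def algCoRank (R : Type*) [CommRing R] [Fintype V] (G : SimpleGraph V) : ℕ :=
  sSup {i | i ≤ Fintype.card V ∧ criticalIdeal R G i = ⊤}

/-- The rank of a square matrix over a commutative ring: the largest `k` such that some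
`k × k` minor is nonzero and is not a zero divisor. -/
noncomputable def ringRank {R : Type*} [CommRing R] (M : Matrix V V R) : ℕ :=
  sSup {k | ∃ f g : Fin k → V, Function.Injective f ∧ Function.Injective g ∧
    (M.submatrix f g).det ≠ 0 ∧ (M.submatrix f g).det ∈ nonZeroDivisors R}

/-- `A ∈ S_R(G)`: `A` is a symmetric matrix over `R`, indexed by the vertices of `G`, whose
off-diagonal `(u,v)` entry is nonzero iff `u` and `v` are adjacent (the diagonal is free). -/
def IsGraphMatrix {R : Type*} [CommRing R] (G : SimpleGraph V) (A : Matrix V V R) : Prop :=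
  A.IsSymm ∧ ∀ u v : V, u ≠ v → (A u v ≠ 0 ↔ G.Adj u v)

/-- The minimum rank `mr_R(G)`: the smallest rank among matrices in `S_R(G)`. -/
noncomputable def minRank (R : Type*) [CommRing R] (G : SimpleGraph V) : ℕ :=
  sInf {k | ∃ A : Matrix V V R, IsGraphMatrix G A ∧ ringRank A = k}

/-- The generalized Laplacian of `G` evaluated at a vector `d`: `L(G, d)` has `d u` on the
diagonal, `-1` at adjacent off-diagonal pairs and `0` elsewhere. -/
noncomputable def evalLaplacian {R : Type*} [CommRing R] (G : SimpleGraph V) (d : V → R) :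
    Matrix V V R := fun u v =>
  if u = v then d u else if G.Adj u v then -1 else 0

/-- The critical minimum rank `mr^cr_R(G)`: the minimum of `rank (L(G,d))` over `d ∈ R^{V(G)}`. -/
noncomputable def crMinRank (R : Type*) [CommRing R] (G : SimpleGraph V) : ℕ :=
  sInf {k | ∃ d : V → R, ringRank (evalLaplacian G d) = k}

/-- `a, b : Fin k → V` form a chronological list of forces for the zero forcing game on `G`
started with the vertices of `B` blue: at step `t` the force `a t → b t` is performed, which
requires that `a t` is blue, that `b t` is a white neighbor of `a t`, and that every white
neighbor of `a t` equals `b t`. -/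
def IsChronList (G : SimpleGraph V) (B : Set V) {k : ℕ} (a b : Fin k → V) : Prop :=
  (∀ t, G.Adj (a t) (b t)) ∧
  (∀ t, a t ∈ B ∨ ∃ s, s < t ∧ b s = a t) ∧
  (∀ t, b t ∉ B ∧ ∀ s, s < t → b s ≠ b t) ∧
  (∀ t z, G.Adj (a t) z → z ∉ B → (∀ s, s < t → b s ≠ z) → z = b t)

/-- `B` is a zero forcing set of `G`: starting with exactly `B` blue, there is a sequence of
forces turning every vertex of `G` blue. -/
def IsZeroForcingSet (G : SimpleGraph V) (B : Set V) : Prop :=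
  ∃ (k : ℕ) (a b : Fin k → V), IsChronList G B a b ∧ ∀ v : V, v ∈ B ∨ ∃ t, b t = v

/-- The zero forcing number `Z(G)`: the minimum cardinality of a zero forcing set of `G`. -/
noncomputable def zeroForcingNumber [Fintype V] (G : SimpleGraph V) : ℕ :=
  sInf {m | ∃ B : Finset V, B.card = m ∧ IsZeroForcingSet G ↑B}

/-- `mz(G) = |V(G)| - Z(G)`. -/
noncomputable def mz [Fintype V] (G : SimpleGraph V) : ℕ :=
  Fintype.card V - zeroForcingNumber G

section AuxProofs

open Function

variable {V : Type*}

namespace MzAux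

variable {G : SimpleGraph V} {B : Set V} {k : ℕ} {a c : Fin k → V}

lemma b_ne (h : IsChronList G B a c) {s t : Fin k} (hst : s < t) : c s ≠ c t :=
  (h.2.2.1 t).2 s hst

lemma b_inj (h : IsChronList G B a c) : Function.Injective c := by
  intro s t hst
  by_contra hne
  rcases lt_or_gt_of_ne hne with hl | hl
  · exact b_ne h hl hst
  · exact b_ne h hl hst.symm

lemma a_ne_b (h : IsChronList G B a c) {t s : Fin k} (hts : t ≤ s) : a t ≠ c s := by
  rcases h.2.1 t with hB | ⟨r, hr, hrb⟩
  · intro he; exact (h.2.2.1 s).1 (he ▸ hB)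
  · intro he; exact b_ne h (lt_of_lt_of_le hr hts) (hrb.trans he)

lemma not_adj (h : IsChronList G B a c) {t s : Fin k} (hts : t < s) :
    ¬ G.Adj (a t) (c s) := by
  intro hadj
  have := h.2.2.2 t (c s) hadj (h.2.2.1 s).1 (fun r hr => b_ne h (hr.trans hts))
  exact b_ne h hts this.symm

lemma a_inj (h : IsChronList G B a c) : Function.Injective a := by
  have key : ∀ s t : Fin k, s < t → a s ≠ a t := by
    intro s t hst he
    exact not_adj h hst (he ▸ h.1 t)
  intro s t he
  by_contra hne
  rcases lt_or_gt_of_ne hne with hl | hl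
  · exact key s t hl he
  · exact key t s hl he.symm

lemma det_submatrix {R : Type*} [CommRing R] (h : IsChronList G B a c)
    {M : Matrix V V R} (hM : ∀ u v, u ≠ v → ¬ G.Adj u v → M u v = 0) :
    (M.submatrix a c).det = ∏ t, M (a t) (c t) := by
  rw [Matrix.det_of_lowerTriangular]
  · rfl
  · intro s t hst
    have hst' : s < t := hst
    exact hM _ _ (a_ne_b h hst'.le) (not_adj h hst')

end MzAux

open MzAux

lemma exists_good_chron [Fintype V] (G : SimpleGraph V) :
    ∃ (k : ℕ) (B : Set V) (a c : Fin k → V), IsChronList G B a c ∧ mz G ≤ k := by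
  classical
  have hne : {m | ∃ B : Finset V, B.card = m ∧ IsZeroForcingSet G ↑B}.Nonempty := by
    refine ⟨Fintype.card V, Finset.univ, by simp, 0, Fin.elim0, Fin.elim0, ?_, ?_⟩
    · exact ⟨fun t => t.elim0, fun t => t.elim0, fun t => t.elim0, fun t => t.elim0⟩
    · intro v; exact Or.inl (by simp)
  obtain ⟨B0, hcard, kk, a, c, hc, hcov⟩ := Nat.sInf_mem hne
  refine ⟨kk, ↑B0, a, c, hc, ?_⟩
  have hsub : (Finset.univ : Finset V) ⊆ B0 ∪ Finset.univ.image c := by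
    intro v _
    rcases hcov v with hv | ⟨t, ht⟩
    · exact Finset.mem_union_left _ (Finset.mem_coe.1 hv)
    · exact Finset.mem_union_right _ (Finset.mem_image.2 ⟨t, Finset.mem_univ t, ht⟩)
  have hcount : Fintype.card V ≤ B0.card + kk := by
    calc Fintype.card V = (Finset.univ : Finset V).card := (Finset.card_univ).symm
      _ ≤ (B0 ∪ Finset.univ.image c).card := Finset.card_le_card hsub
      _ ≤ B0.card + (Finset.univ.image c).card := Finset.card_union_le _ _
      _ ≤ B0.card + kk := by
          gcongr
          exact (Finset.card_image_le).trans (by simp)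
  have : Fintype.card V - B0.card ≤ kk := by omega
  simpa [mz, zeroForcingNumber, hcard] using this

lemma ringRank_bddAbove [Fintype V] {R : Type*} [CommRing R] (M : Matrix V V R) :
    BddAbove {k | ∃ f g : Fin k → V, Function.Injective f ∧ Function.Injective g ∧
      (M.submatrix f g).det ≠ 0 ∧ (M.submatrix f g).det ∈ nonZeroDivisors R} := by
  refine ⟨Fintype.card V, fun i hi => ?_⟩
  obtain ⟨f, g, hf, hg, _⟩ := hi
  simpa using Fintype.card_le_of_injective f hf

lemma mz_le_ringRank [Fintype V] {R : Type*} [CommRing R] [IsDomain R] {G : SimpleGraph V}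
    {A : Matrix V V R}
    (h0 : ∀ u v, u ≠ v → ¬ G.Adj u v → A u v = 0)
    (hadj : ∀ u v, G.Adj u v → A u v ≠ 0) :
    mz G ≤ ringRank A := by
  obtain ⟨k, B, a, c, hc, hmz⟩ := exists_good_chron G
  refine hmz.trans ?_
  have hne : (A.submatrix a c).det ≠ 0 := by
    rw [det_submatrix hc h0]
    exact Finset.prod_ne_zero_iff.2 fun t _ => hadj _ _ (hc.1 t)
  exact le_csSup (ringRank_bddAbove A)
    ⟨a, c, a_inj hc, b_inj hc, hne, mem_nonZeroDivisors_of_ne_zero hne⟩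

lemma mz_le_algCoRank [Fintype V] (R : Type*) [CommRing R] (G : SimpleGraph V) :
    mz G ≤ algCoRank R G := by
  obtain ⟨k, B, a, c, hc, hmz⟩ := exists_good_chron G
  refine hmz.trans (le_csSup ⟨Fintype.card V, fun i hi => hi.1⟩ ?_)
  have hdet : ((genLaplacian R G).submatrix a c).det = (-1 : MvPolynomial V R) ^ k := by
    rw [det_submatrix hc (fun u v hne hnadj => by simp [genLaplacian, hne, hnadj])]
    have : ∀ t : Fin k, genLaplacian R G (a t) (c t) = -1 := fun t => by
      simp [genLaplacian, G.ne_of_adj (hc.1 t), hc.1 t]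
    simp [this]
  refine ⟨by simpa using Fintype.card_le_of_injective c (b_inj hc), ?_⟩
  refine Ideal.eq_top_of_isUnit_mem _
    (Ideal.subset_span ⟨a, c, a_inj hc, b_inj hc, rfl⟩) ?_
  rw [hdet]
  exact (isUnit_one.neg).pow k

lemma criticalIdeal_zero (R : Type*) [CommRing R] (G : SimpleGraph V) :
    criticalIdeal R G 0 = ⊤ := by
  rw [Ideal.eq_top_iff_one]
  refine Ideal.subset_span ⟨Fin.elim0, Fin.elim0, fun x => x.elim0, fun x => x.elim0, ?_⟩
  exact Matrix.det_fin_zero.symm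

lemma minorsIdeal_map_top {S S' : Type*} [CommRing S] [CommRing S'] (φ : S →+* S')
    {M : Matrix V V S} {i : ℕ} (h : minorsIdeal M i = ⊤) :
    minorsIdeal (M.map φ) i = ⊤ := by
  have hle : Ideal.map φ (minorsIdeal M i) ≤ minorsIdeal (M.map φ) i := by
    rw [minorsIdeal, Ideal.map_span]
    apply Ideal.span_mono
    rintro x ⟨y, ⟨f, g, hf, hg, rfl⟩, rfl⟩
    refine ⟨f, g, hf, hg, ?_⟩
    simp [RingHom.map_det, RingHom.mapMatrix_apply, Matrix.submatrix_map]
  rw [Ideal.eq_top_iff_one] at h ⊢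
  exact hle (by simpa using Ideal.mem_map_of_mem φ h)

lemma map_genLaplacian {R : Type*} [CommRing R] (G : SimpleGraph V) (d : V → R) :
    (genLaplacian R G).map (MvPolynomial.eval d) = evalLaplacian G d := by
  ext u v
  by_cases h1 : u = v <;> by_cases h2 : G.Adj u v <;>
    simp [genLaplacian, evalLaplacian, Matrix.map_apply, h1, h2]

lemma algCoRank_le_ringRank_eval [Fintype V] {R : Type*} [CommRing R] [IsDomain R]
    (G : SimpleGraph V) (d : V → R) :
    algCoRank R G ≤ ringRank (evalLaplacian G d) := by
  have hγ : algCoRank R G ∈ {i | i ≤ Fintype.card V ∧ criticalIdeal R G i = ⊤} :=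
    Nat.sSup_mem ⟨0, Nat.zero_le _, criticalIdeal_zero R G⟩
      ⟨Fintype.card V, fun i hi => hi.1⟩
  set γ := algCoRank R G with hγdef
  have htop : minorsIdeal (evalLaplacian G d) γ = ⊤ := by
    rw [← map_genLaplacian G d]
    exact minorsIdeal_map_top _ hγ.2
  have hex : ∃ f g : Fin γ → V, Function.Injective f ∧ Function.Injective g ∧
      ((evalLaplacian G d).submatrix f g).det ≠ 0 := by
    by_contra hcon
    push_neg at hcon
    have hle : minorsIdeal (evalLaplacian G d) γ ≤ ⊥ := by
      rw [minorsIdeal, Ideal.span_le]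
      rintro x ⟨f, g, hf, hg, rfl⟩
      simpa using hcon f g hf hg
    rw [htop] at hle
    have h1 : (1 : R) ∈ (⊥ : Ideal R) := hle Submodule.mem_top
    exact (one_ne_zero : (1 : R) ≠ 0) ((Ideal.mem_bot).1 h1)
  obtain ⟨f, g, hf, hg, hne⟩ := hex
  exact le_csSup (ringRank_bddAbove _)
    ⟨f, g, hf, hg, hne, mem_nonZeroDivisors_of_ne_zero hne⟩

end AuxProofs



lemma evalLaplacian_map_cast (G : SimpleGraph V) (d : V → ℤ) :
    evalLaplacian G (fun v => ((d v : ℤ) : ℝ)) = (evalLaplacian G d).map (Int.cast : ℤ → ℝ) := by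
  ext u v
  by_cases h1 : u = v <;> by_cases h2 : G.Adj u v <;>
    simp [evalLaplacian, Matrix.map_apply, h1, h2]

lemma det_submatrix_cast (M : Matrix V V ℤ) {i : ℕ} (f g : Fin i → V) :
    ((M.map (Int.cast : ℤ → ℝ)).submatrix f g).det = ((M.submatrix f g).det : ℝ) := by
  have h : M.map (Int.cast : ℤ → ℝ) = M.map (Int.castRingHom ℝ) := rfl
  rw [h, Matrix.submatrix_map, ← RingHom.mapMatrix_apply, ← RingHom.map_det]
  rfl

lemma ringRank_map_intCast (M : Matrix V V ℤ) :
    ringRank (M.map (Int.cast : ℤ → ℝ)) = ringRank M := by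
  unfold ringRank
  congr 1
  ext i
  simp only [Set.mem_setOf_eq, det_submatrix_cast M, mem_nonZeroDivisors_iff_ne_zero,
    ne_eq, Int.cast_eq_zero, and_self_iff]

lemma isGraphMatrix_evalLaplacian {R : Type*} [CommRing R] [Nontrivial R]
    (G : SimpleGraph V) (d : V → R) : IsGraphMatrix G (evalLaplacian G d) := by
  constructor
  · ext u v
    by_cases h1 : u = v
    · subst h1; rfl
    · have hvu : G.Adj v u ↔ G.Adj u v := G.adj_comm v u
      by_cases h2 : G.Adj u v <;>
        simp [evalLaplacian, Matrix.transpose_apply, h1, Ne.symm h1, h2, hvu]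
  · intro u v huv
    by_cases h2 : G.Adj u v <;> simp [evalLaplacian, huv, h2]

lemma evalLaplacian_zero_pattern {R : Type*} [CommRing R] (G : SimpleGraph V) (d : V → R)
    {u v : V} (h1 : u ≠ v) (h2 : ¬ G.Adj u v) : evalLaplacian G d u v = 0 := by
  simp [evalLaplacian, h1, h2]

lemma evalLaplacian_adj_ne {R : Type*} [CommRing R] [Nontrivial R] (G : SimpleGraph V)
    (d : V → R) {u v : V} (h2 : G.Adj u v) : evalLaplacian G d u v ≠ 0 := by
  simp [evalLaplacian, G.ne_of_adj h2, h2]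


/-- If there is a vector `d ∈ ℤ^{V(G)}` such that
`rank (L(G,d)) = mz(G)`, then
`mz(G) = mr(G) = mr_ℤ(G) = γ(G) = γ_ℤ(G) = mr^cr_ℤ(G)`, where `γ = γ_ℝ` and `mr = mr_ℝ`. -/
theorem mz_eq_all_of_exists_eval {V : Type*} [Fintype V] (G : SimpleGraph V)
    (h : ∃ d : V → ℤ, ringRank (evalLaplacian G d) = mz G) :
    mz G = minRank ℝ G ∧ minRank ℝ G = minRank ℤ G ∧ minRank ℤ G = algCoRank ℝ G ∧
      algCoRank ℝ G = algCoRank ℤ G ∧ algCoRank ℤ G = crMinRank ℤ G := by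
  classical
  obtain ⟨d, hd⟩ := h
  have hdR : ringRank (evalLaplacian G (fun v => ((d v : ℤ) : ℝ))) = mz G := by
    rw [evalLaplacian_map_cast, ringRank_map_intCast, hd]
  have hγZ : algCoRank ℤ G = mz G :=
    le_antisymm ((algCoRank_le_ringRank_eval G d).trans_eq hd) (mz_le_algCoRank ℤ G)
  have hγR : algCoRank ℝ G = mz G :=
    le_antisymm ((algCoRank_le_ringRank_eval G (fun v => ((d v : ℤ) : ℝ))).trans_eq hdR)
      (mz_le_algCoRank ℝ G)
  have hcr : crMinRank ℤ G = mz G := by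
    refine le_antisymm (Nat.sInf_le ⟨d, hd⟩) (le_csInf ⟨mz G, d, hd⟩ ?_)
    rintro m ⟨d', rfl⟩
    exact mz_le_ringRank (fun u v h1 h2 => evalLaplacian_zero_pattern G d' h1 h2)
      (fun u v h2 => evalLaplacian_adj_ne G d' h2)
  have hmz_le_mr : ∀ {R : Type} [CommRing R], ∀ [IsDomain R], mz G ≤ minRank R G := by
    intro R _ _
    refine le_csInf ⟨ringRank (evalLaplacian G (0 : V → R)),
      evalLaplacian G (0 : V → R), isGraphMatrix_evalLaplacian G _, rfl⟩ ?_
    rintro m ⟨A, hA, rfl⟩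
    refine mz_le_ringRank ?_ ?_
    · intro u v h1 h2
      by_contra hne0
      exact h2 ((hA.2 u v h1).1 hne0)
    · intro u v h2
      exact (hA.2 u v (G.ne_of_adj h2)).2 h2
  have hmrZ : minRank ℤ G = mz G :=
    le_antisymm (Nat.sInf_le ⟨evalLaplacian G d, isGraphMatrix_evalLaplacian G d, hd⟩)
      hmz_le_mr
  have hmrR : minRank ℝ G = mz G :=
    le_antisymm (Nat.sInf_le ⟨evalLaplacian G (fun v => ((d v : ℤ) : ℝ)),
      isGraphMatrix_evalLaplacian G _, hdR⟩) hmz_le_mr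
  exact ⟨hmrR.symm, hmrR.trans hmrZ.symm, hmrZ.trans hγR.symm, hγR.trans hγZ.symm,
    hγZ.trans hcr.symm⟩
end

section
/- The Petersen graph G satisfies mz(G) = mr^cr_ℤ(G) = 5, and this common value equals mr(G), mr_ℤ(G), γ(G) = γ_ℝ(G), and γ_ℤ(G). -/
open scoped Classical

variable {V : Type*}

/-- The Petersen graph: vertices are the 2-element subsets of a 5-element set, two of them
adjacent iff they are disjoint (the Kneser graph `K(5,2)`). -/
def petersenGraph : SimpleGraph {s : Finset (Fin 5) // s.card = 2} where
  Adj s t := Disjoint (s : Finset (Fin 5)) (t : Finset (Fin 5))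
  symm := ⟨fun s t h => h.symm⟩
  loopless := by
    refine ⟨?_⟩
    intro s h
    have hbot : (s : Finset (Fin 5)) = ∅ := by
      simpa using disjoint_self.mp h
    have := s.2
    rw [hbot] at this
    simp at this

/-! Label the vertices by the 2-subsets of `{0,…,4}`. The entry of `L(G,1) = I - A` at `(s,t)` is
`|s ∩ t| - 1`, so `2 • L(G,1) = U (2 Uᵀ - J)` with `U` the 10 × 5 incidence matrix between pairs
and points (the factor 2 keeps the factorization integral). Hence `L(G,1)` has rank at most 5
over every domain of characteristic zero: all its minors of size greater than 5 vanish, which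
bounds the ranks from above and makes the critical ideals `I_i`, `i > 5`, proper (evaluate at
`x = 1`).

Conversely, the outer vertex `{i, i+1}` has exactly one inner neighbour `{i+2, i+4}`, so the
outer × inner submatrix of any matrix in `S(G)` is a permuted diagonal matrix with nonzero
diagonal; for the generalized Laplacian its determinant is `-1`.

The outer 5-cycle is a zero forcing set. A null vector of a matrix in `S(G)` that vanishes on a
zero forcing set vanishes everywhere, so `Z(G) ≥ 10 - rank L(G,1) ≥ 5`. -/

section Rank

variable {R : Type*} [CommRing R]

theorem le_rank_of_det_submatrix_mem_nonZeroDivisors [Nontrivial R] [Fintype V]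
    (M : Matrix V V R) {k : ℕ} (f g : Fin k → V)
    (hdet : (M.submatrix f g).det ∈ nonZeroDivisors R) : k ≤ M.rank := by
  simpa [Matrix.rank_of_det_mem_nonZeroDivisors hdet] using M.rank_submatrix_le f g

theorem det_submatrix_eq_zero_of_rank_lt [IsDomain R] [Fintype V] (M : Matrix V V R)
    {k : ℕ} (f g : Fin k → V) (hk : M.rank < k) : (M.submatrix f g).det = 0 := by
  by_contra hdet
  exact hk.not_ge
    (le_rank_of_det_submatrix_mem_nonZeroDivisors M f g (mem_nonZeroDivisors_of_ne_zero hdet))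

theorem ringRank_le_rank [Nontrivial R] [Fintype V] (M : Matrix V V R) :
    ringRank M ≤ M.rank := by
  refine csSup_le ⟨0, Fin.elim0, Fin.elim0, Function.injective_of_subsingleton _,
    Function.injective_of_subsingleton _, by simp, by simp⟩ ?_
  rintro k ⟨f, g, -, -, -, hdet⟩
  exact le_rank_of_det_submatrix_mem_nonZeroDivisors M f g hdet

theorem le_ringRank [Fintype V] (M : Matrix V V R) {k : ℕ} {f g : Fin k → V}
    (hf : Function.Injective f) (hg : Function.Injective g)
    (hdet : (M.submatrix f g).det ∈ nonZeroDivisors R) (hne : (M.submatrix f g).det ≠ 0) :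
    k ≤ ringRank M := by
  refine le_csSup ⟨Fintype.card V, ?_⟩ ⟨f, g, hf, hg, hne, hdet⟩
  rintro j ⟨f', -, hf', -⟩
  simpa using Fintype.card_le_of_injective f' hf'

end Rank

namespace IsZeroForcingSet

open Matrix

variable {G : SimpleGraph V} {B : Set V}

theorem eq_zero_of_mulVec_eq_zero {R : Type*} [CommRing R] [NoZeroDivisors R] [Fintype V]
    (hB : IsZeroForcingSet G B) {A : Matrix V V R}
    (hA : ∀ u v : V, u ≠ v → (A u v ≠ 0 ↔ G.Adj u v)) {x : V → R} (hx : A *ᵥ x = 0)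
    (hxB : ∀ v ∈ B, x v = 0) : x = 0 := by
  obtain ⟨k, a, b, ⟨hadj, hsource, -, hunique⟩, hcover⟩ := hB
  have hforced : ∀ t, x (b t) = 0 := by
    intro t
    induction t using WellFoundedLT.induction with
    | ind t ih =>
      have hblue : ∀ z, (z ∈ B ∨ ∃ s < t, b s = z) → x z = 0 := by
        rintro z (hz | ⟨s, hst, rfl⟩)
        exacts [hxB z hz, ih s hst]
      have hrow : ∑ z, A (a t) z * x z = A (a t) (b t) * x (b t) := by
        refine Finset.sum_eq_single (b t) (fun z _ hzb => ?_) (by simp)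
        by_cases hza : z = a t
        · rw [hblue z (hza ▸ hsource t), mul_zero]
        by_cases hadjz : G.Adj (a t) z
        · rw [hblue z ?_, mul_zero]
          by_contra! hwhite
          exact hzb (hunique t z hadjz hwhite.1 hwhite.2)
        · rw [not_ne_iff.mp (mt (hA _ _ (Ne.symm hza)).mp hadjz), zero_mul]
      have hne : A (a t) (b t) ≠ 0 := (hA _ _ (hadj t).ne).mpr (hadj t)
      have hrow_zero := congrFun hx (a t)
      rw [mulVec, dotProduct, hrow] at hrow_zero
      exact (mul_eq_zero.mp hrow_zero).resolve_left hne
  funext v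
  rcases hcover v with hv | ⟨t, rfl⟩
  exacts [hxB v hv, hforced t]

theorem card_le_rank_add_card {K : Type*} [Field K] [Fintype V] {B : Finset V}
    (hB : IsZeroForcingSet G B) {A : Matrix V V K}
    (hA : ∀ u v : V, u ≠ v → (A u v ≠ 0 ↔ G.Adj u v)) :
    Fintype.card V ≤ A.rank + B.card := by
  let restrict := (LinearMap.funLeft K K ((↑) : B → V)).comp (LinearMap.ker A.mulVecLin).subtype
  have hinj : Function.Injective restrict := by
    refine (injective_iff_map_eq_zero restrict).mpr fun x hx => Subtype.ext ?_
    exact hB.eq_zero_of_mulVec_eq_zero hA (LinearMap.mem_ker.mp x.2) fun v hv =>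
      congrFun hx ⟨v, hv⟩
  have hker := LinearMap.finrank_le_finrank_of_injective hinj
  have hnullity := LinearMap.finrank_range_add_finrank_ker A.mulVecLin
  simp only [Module.finrank_fintype_fun_eq_card, Fintype.card_coe] at hker hnullity
  rw [Matrix.rank]
  omega

end IsZeroForcingSet

section Laplacian

variable {R : Type*} [CommRing R] (G : SimpleGraph V)

theorem evalLaplacian_apply_ne [Nontrivial R] {d : V → R} {u v : V} (huv : u ≠ v) :
    evalLaplacian G d u v ≠ 0 ↔ G.Adj u v := by
  by_cases h : G.Adj u v <;> simp [evalLaplacian, huv, h]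

theorem genLaplacian_apply_ne [Nontrivial R] {u v : V} (huv : u ≠ v) :
    genLaplacian R G u v ≠ 0 ↔ G.Adj u v := by
  by_cases h : G.Adj u v <;> simp [genLaplacian, huv, h]

theorem evalLaplacian_isGraphMatrix [Nontrivial R] (d : V → R) :
    IsGraphMatrix G (evalLaplacian G d) := by
  refine ⟨Matrix.IsSymm.ext fun u v => ?_, fun u v huv => evalLaplacian_apply_ne G huv⟩
  by_cases h : u = v
  · subst h; rfl
  · simp [evalLaplacian, h, Ne.symm h, G.adj_comm]

theorem genLaplacian_map_eval (d : V → R) :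
    (genLaplacian R G).map (MvPolynomial.eval d) = evalLaplacian G d := by
  ext u v
  simp only [Matrix.map_apply, genLaplacian, evalLaplacian]
  split_ifs <;> simp

end Laplacian

theorem minorsIdeal_map {S T : Type*} [CommRing S] [CommRing T] (φ : S →+* T)
    (M : Matrix V V S) (i : ℕ) : (minorsIdeal M i).map φ = minorsIdeal (M.map φ) i := by
  rw [minorsIdeal, minorsIdeal, Ideal.map_span]
  congr 1
  ext d
  constructor
  · rintro ⟨_, ⟨f, g, hf, hg, rfl⟩, rfl⟩
    exact ⟨f, g, hf, hg, by rw [RingHom.map_det]; rfl⟩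
  · rintro ⟨f, g, hf, hg, rfl⟩
    exact ⟨_, ⟨f, g, hf, hg, rfl⟩, by rw [RingHom.map_det]; rfl⟩

theorem minorsIdeal_eq_bot {S : Type*} [CommRing S] {M : Matrix V V S} {i : ℕ}
    (h : ∀ f g : Fin i → V, (M.submatrix f g).det = 0) : minorsIdeal M i = ⊥ := by
  rw [minorsIdeal, Ideal.span_eq_bot]
  rintro _ ⟨f, g, -, -, rfl⟩
  exact h f g

theorem criticalIdeal_ne_top {R : Type*} [CommRing R] [Nontrivial R] {G : SimpleGraph V}
    {i : ℕ} (d : V → R) (h : ∀ f g : Fin i → V, ((evalLaplacian G d).submatrix f g).det = 0) :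
    criticalIdeal R G i ≠ ⊤ := by
  intro htop
  have := minorsIdeal_map (MvPolynomial.eval d) (genLaplacian R G) i
  rw [← criticalIdeal, htop, Ideal.map_top, genLaplacian_map_eval, minorsIdeal_eq_bot h] at this
  exact top_ne_bot this

theorem minRank_eq_of_forall_le {R : Type*} [CommRing R] [Nontrivial R] {G : SimpleGraph V}
    {r : ℕ} (d : V → R) (hd : ringRank (evalLaplacian G d) = r)
    (hle : ∀ A : Matrix V V R, IsGraphMatrix G A → r ≤ ringRank A) : minRank R G = r :=
  IsLeast.csInf_eq ⟨⟨_, evalLaplacian_isGraphMatrix G d, hd⟩, by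
    rintro _ ⟨A, hA, rfl⟩
    exact hle A hA⟩

theorem crMinRank_eq_of_forall_le {R : Type*} [CommRing R] {G : SimpleGraph V} {r : ℕ}
    (d : V → R) (hd : ringRank (evalLaplacian G d) = r)
    (hle : ∀ d : V → R, r ≤ ringRank (evalLaplacian G d)) : crMinRank R G = r :=
  IsLeast.csInf_eq ⟨⟨d, hd⟩, by
    rintro _ ⟨d, rfl⟩
    exact hle d⟩

theorem algCoRank_eq_of_forall_lt_ne_top {R : Type*} [CommRing R] [Fintype V]
    {G : SimpleGraph V} {r : ℕ} (hr : r ≤ Fintype.card V) (htop : criticalIdeal R G r = ⊤)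
    (hne : ∀ i, r < i → criticalIdeal R G i ≠ ⊤) : algCoRank R G = r :=
  IsGreatest.csSup_eq ⟨⟨hr, htop⟩, by
    rintro i ⟨-, hi⟩
    by_contra! hlt
    exact hne i hlt hi⟩

namespace Petersen

open Matrix

abbrev Vertex := {s : Finset (Fin 5) // s.card = 2}

instance : DecidableRel petersenGraph.Adj := fun s t =>
  inferInstanceAs (Decidable (Disjoint (s : Finset (Fin 5)) t))

theorem card_vertex : Fintype.card Vertex = 10 := by decide

def outer (i : Fin 5) : Vertex := ⟨{i, i + 1}, by revert i; decide⟩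

def inner (i : Fin 5) : Vertex := ⟨{i, i + 2}, by revert i; decide⟩

theorem outer_injective : Function.Injective outer := by decide

theorem inner_injective : Function.Injective inner := by decide

theorem outer_ne_inner (i j : Fin 5) : outer i ≠ inner j := by revert i j; decide

theorem adj_outer_inner_iff (i j : Fin 5) : petersenGraph.Adj (outer i) (inner j) ↔ j = i + 2 := by
  revert i j; decide

theorem det_submatrix_outer_inner {R : Type*} [CommRing R] {A : Matrix Vertex Vertex R}
    (hA : ∀ u v, u ≠ v → (A u v ≠ 0 ↔ petersenGraph.Adj u v)) :
    (A.submatrix outer inner).det = ∏ i, A (outer i) (inner (i + 2)) := by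
  let σ : Equiv.Perm (Fin 5) := Equiv.addRight 2
  have hperm : A.submatrix outer inner =
      (diagonal fun i => A (outer i) (inner (i + 2))).submatrix id σ.symm := by
    ext i j
    by_cases hij : j = i + 2
    · subst hij; simp [σ]
    · have hzero : A (outer i) (inner j) = 0 := by
        by_contra h
        exact hij ((adj_outer_inner_iff i j).mp ((hA _ _ (outer_ne_inner i j)).mp h))
      have : i ≠ j + -2 := by rintro rfl; simp at hij
      simp [σ, hzero, this]
  rw [hperm, det_permute', det_diagonal, show Equiv.Perm.sign σ.symm = 1 by decide]
  simp

theorem card_inter_eq_one {s t : Vertex} (hst : s ≠ t) (hadj : ¬petersenGraph.Adj s t) :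
    ((s : Finset (Fin 5)) ∩ t).card = 1 := by
  revert s t; decide

theorem evalLaplacian_one_apply {R : Type*} [CommRing R] (s t : Vertex) :
    evalLaplacian petersenGraph 1 s t = (((s : Finset (Fin 5)) ∩ t).card : R) - 1 := by
  by_cases hst : s = t
  · subst hst; norm_num [evalLaplacian, s.2]
  by_cases hadj : petersenGraph.Adj s t
  · simp [evalLaplacian, hst, hadj, Finset.disjoint_iff_inter_eq_empty.mp hadj]
  · simp [evalLaplacian, hst, hadj, card_inter_eq_one hst hadj]

def incidence (R : Type*) [CommRing R] : Matrix Vertex (Fin 5) R :=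
  fun s a => if a ∈ (s : Finset (Fin 5)) then 1 else 0

theorem sum_incidence_mul {R : Type*} [CommRing R] (s t : Vertex) :
    ∑ a, incidence R s a * incidence R t a = (((s : Finset (Fin 5)) ∩ t).card : R) := by
  simp [incidence, ← ite_and, Finset.filter_and, Finset.inter_comm]

theorem sum_incidence {R : Type*} [CommRing R] (s : Vertex) : ∑ a, incidence R s a = 2 := by
  simp [incidence, s.2]

theorem two_smul_evalLaplacian_one {R : Type*} [CommRing R] :
    (2 : R) • evalLaplacian petersenGraph 1 =
      incidence R * ((2 : R) • (incidence R)ᵀ - of fun _ _ => 1) := by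
  ext s t
  have hsum : ∑ a, incidence R s a * (2 * incidence R t a - 1) =
      2 * ∑ a, incidence R s a * incidence R t a - ∑ a, incidence R s a := by
    simp only [mul_sub, mul_one, Finset.sum_sub_distrib, Finset.mul_sum]
    ring_nf
  simp only [Matrix.smul_apply, mul_apply, Matrix.sub_apply, transpose_apply, of_apply,
    smul_eq_mul]
  rw [hsum, sum_incidence_mul, sum_incidence, evalLaplacian_one_apply]
  ring

theorem rank_evalLaplacian_one_le {R : Type*} [CommRing R] [IsDomain R] [CharZero R] :
    (evalLaplacian petersenGraph (1 : Vertex → R)).rank ≤ 5 :=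
  calc (evalLaplacian petersenGraph (1 : Vertex → R)).rank
      = ((2 : R) • evalLaplacian petersenGraph 1).rank :=
        (rank_smul_of_mem_nonZeroDivisors _ (mem_nonZeroDivisors_of_ne_zero two_ne_zero)).symm
    _ ≤ ((2 : R) • (incidence R)ᵀ - of fun _ _ => 1).rank := by
        rw [two_smul_evalLaplacian_one]
        exact rank_mul_le_right _ _
    _ ≤ 5 := (rank_le_card_height _).trans_eq (Fintype.card_fin 5)

theorem five_le_ringRank {R : Type*} [CommRing R] [IsDomain R] {A : Matrix Vertex Vertex R}
    (hA : IsGraphMatrix petersenGraph A) : 5 ≤ ringRank A := by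
  have hdet : (A.submatrix outer inner).det ≠ 0 := by
    rw [det_submatrix_outer_inner hA.2, Finset.prod_ne_zero_iff]
    exact fun i _ => (hA.2 _ _ (outer_ne_inner _ _)).mpr ((adj_outer_inner_iff _ _).mpr rfl)
  exact le_ringRank A outer_injective inner_injective (mem_nonZeroDivisors_of_ne_zero hdet) hdet

theorem ringRank_evalLaplacian_one {R : Type*} [CommRing R] [IsDomain R] [CharZero R] :
    ringRank (evalLaplacian petersenGraph (1 : Vertex → R)) = 5 :=
  le_antisymm ((ringRank_le_rank _).trans rank_evalLaplacian_one_le)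
    (five_le_ringRank (evalLaplacian_isGraphMatrix _ _))

theorem criticalIdeal_five {R : Type*} [CommRing R] [Nontrivial R] :
    criticalIdeal R petersenGraph 5 = ⊤ := by
  have hmem : ((genLaplacian R petersenGraph).submatrix outer inner).det ∈
      criticalIdeal R petersenGraph 5 :=
    Ideal.subset_span ⟨outer, inner, outer_injective, inner_injective, rfl⟩
  have hentry (i : Fin 5) : genLaplacian R petersenGraph (outer i) (inner (i + 2)) = -1 := by
    simp [genLaplacian, outer_ne_inner, adj_outer_inner_iff]
  refine Ideal.eq_top_of_isUnit_mem _ hmem ?_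
  rw [det_submatrix_outer_inner fun u v => genLaplacian_apply_ne petersenGraph]
  simp [hentry]

theorem algCoRank_eq_five {R : Type*} [CommRing R] [IsDomain R] [CharZero R] :
    algCoRank R petersenGraph = 5 := by
  refine algCoRank_eq_of_forall_lt_ne_top (by rw [card_vertex]; norm_num) criticalIdeal_five
    fun i hi => criticalIdeal_ne_top (1 : Vertex → R) fun f g => ?_
  exact det_submatrix_eq_zero_of_rank_lt _ f g (rank_evalLaplacian_one_le.trans_lt hi)

theorem minRank_eq_five {R : Type*} [CommRing R] [IsDomain R] [CharZero R] :
    minRank R petersenGraph = 5 :=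
  minRank_eq_of_forall_le 1 ringRank_evalLaplacian_one fun _ => five_le_ringRank

theorem crMinRank_eq_five {R : Type*} [CommRing R] [IsDomain R] [CharZero R] :
    crMinRank R petersenGraph = 5 :=
  crMinRank_eq_of_forall_le 1 ringRank_evalLaplacian_one fun d =>
    five_le_ringRank (evalLaplacian_isGraphMatrix _ d)

theorem isZeroForcingSet_outer :
    IsZeroForcingSet petersenGraph ↑(Finset.univ.image outer) := by
  refine ⟨5, outer, fun i => inner (i + 2), ⟨?_, ?_, ?_, ?_⟩, ?_⟩ <;>
    simp only [Finset.coe_image, Finset.coe_univ, Set.image_univ, Set.mem_range] <;> decide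

theorem zeroForcingNumber_eq_five : zeroForcingNumber petersenGraph = 5 := by
  have hcard : (Finset.univ.image outer).card = 5 := by
    rw [Finset.card_image_of_injective _ outer_injective, Finset.card_fin]
  refine IsLeast.csInf_eq ⟨⟨_, hcard, isZeroForcingSet_outer⟩, ?_⟩
  rintro _ ⟨B, rfl, hB⟩
  have hnullity :=
    hB.card_le_rank_add_card (evalLaplacian_isGraphMatrix petersenGraph (1 : Vertex → ℝ)).2
  have hrank := rank_evalLaplacian_one_le (R := ℝ)
  rw [card_vertex] at hnullity
  omega

theorem mz_eq_five : mz petersenGraph = 5 := by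
  rw [mz, zeroForcingNumber_eq_five, card_vertex]

end Petersen

/-- The Petersen graph `G` satisfies `mz(G) = mr^cr_ℤ(G) = 5`, and this
common value equals `mr(G) = mr_ℝ(G)`, `mr_ℤ(G)`, `γ(G) = γ_ℝ(G)`, and `γ_ℤ(G)`. -/
theorem petersen_mz_eq_crMinRank :
    mz petersenGraph = crMinRank ℤ petersenGraph ∧
    mz petersenGraph = 5 ∧
    mz petersenGraph = minRank ℝ petersenGraph ∧
    mz petersenGraph = minRank ℤ petersenGraph ∧
    mz petersenGraph = algCoRank ℝ petersenGraph ∧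
    mz petersenGraph = algCoRank ℤ petersenGraph := by
  simp only [Petersen.mz_eq_five, Petersen.crMinRank_eq_five, Petersen.minRank_eq_five,
    Petersen.algCoRank_eq_five, and_self]
end
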